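/- arXiv:1405.6356 — 4 statements merged into one kernel-verified Lean document; each statement's English description precedes it below -/
import Mathlib

section
/- Let G = ⊕_ω Z/2Z with a group topology, and suppose that for every function f : ω → ω the set U_f = {x ≠ 0 : max supp(x) > f(min supp(x))} ∪ {0} contains an open neighborhood of 0. Let f : ω → ω be increasing, define g(n) = f(2^{n+1}), and let V be a neighborhood of 0 with V + V ⊆ U_g. Then the increasing enumeration (m_0, m_1, …) of the set {max supp(x) : x ∈ V, x ≠ 0} satisfies m_i > f(i) for all i ∈ ω. -/
noncomputable def mins (x : ℕ →₀ ZMod 2) : ℕ := sInf {n | x n ≠ 0}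
noncomputable def maxs (x : ℕ →₀ ZMod 2) : ℕ := sSup {n | x n ≠ 0}

/-- For f : ℕ → ℕ, the set U_f = {x ≠ 0 : max supp x > f (min supp x)} ∪ {0}. -/
def Uf (f : ℕ → ℕ) : Set (ℕ →₀ ZMod 2) := {x | x = 0 ∨ f (mins x) < maxs x}

/-! Among more than `2 ^ K` elements of `V` there are distinct `a, b` agreeing below `K`;
then `a + b ≠ 0` has minimum at least `K` and maximum at most that of `a` or `b`, so
`a + b ∈ U_g` forces `f (2 ^ (K + 1)) < max (maxs a) (maxs b)`. Applied to `0` together with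
elements of `V` of maxima `e 0, …, e i`, and `K = log₂ (i + 1)`, this gives `f i < e i`. -/

theorem exists_ne_forall_lt_eq_of_pow_lt_card {α M : Type*} [Fintype M] {s : Finset α}
    (v : α → ℕ → M) {K : ℕ} (hs : Fintype.card M ^ K < s.card) :
    ∃ a ∈ s, ∃ b ∈ s, a ≠ b ∧ ∀ n < K, v a n = v b n := by
  have hcard : (Finset.univ : Finset (Fin K → M)).card < s.card := by
    simpa [Fintype.card_fun] using hs
  obtain ⟨a, ha, b, hb, hab, hvab⟩ := Finset.exists_ne_map_eq_of_card_lt_of_maps_to hcard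
    (f := fun a (n : Fin K) => v a n) (fun _ _ => Finset.mem_coe.2 (Finset.mem_univ _))
  exact ⟨a, ha, b, hb, hab, fun n hn => congrFun hvab ⟨n, hn⟩⟩

theorem add_ne_zero_of_ne {x y : ℕ →₀ ZMod 2} (hxy : x ≠ y) : x + y ≠ 0 := by
  intro h
  refine hxy (Finsupp.ext fun n => ?_)
  rw [eq_neg_of_add_eq_zero_left h, Finsupp.neg_apply, ZMod.neg_eq_self_mod_two]

theorem le_maxs {x : ℕ →₀ ZMod 2} {n : ℕ} (hn : x n ≠ 0) : n ≤ maxs x :=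
  le_csSup (x.support.finite_toSet.bddAbove.mono fun _ => Finsupp.mem_support_iff.2) hn

theorem maxs_add_le (x y : ℕ →₀ ZMod 2) : maxs (x + y) ≤ max (maxs x) (maxs y) := by
  refine csSup_le' fun n hn => ?_
  by_cases hx : x n = 0
  · have hy : y n ≠ 0 := by simpa [hx] using hn
    exact (le_maxs hy).trans (le_max_right _ _)
  · exact (le_maxs hx).trans (le_max_left _ _)

theorem le_mins_add {x y : ℕ →₀ ZMod 2} {K : ℕ} (hxy : x ≠ y) (h : ∀ n < K, x n = y n) :
    K ≤ mins (x + y) := by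
  have hne : {n | (x + y) n ≠ 0}.Nonempty := by
    obtain ⟨n, hn⟩ := Finsupp.ne_iff.1 (add_ne_zero_of_ne hxy)
    exact ⟨n, hn⟩
  refine le_csInf hne fun n hn => not_lt.1 fun hnK => hn ?_
  rw [Finsupp.add_apply, h n hnK, CharTwo.add_self_eq_zero]

theorem lt_max_maxs_of_add_mem_Uf {f : ℕ → ℕ} (hf : Monotone f) {a b : ℕ →₀ ZMod 2}
    {K : ℕ} (hab : a ≠ b) (hagree : ∀ n < K, a n = b n)
    (hU : a + b ∈ Uf fun n => f (2 ^ (n + 1))) :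
    f (2 ^ (K + 1)) < max (maxs a) (maxs b) := by
  rcases hU with h | h
  · exact absurd h (add_ne_zero_of_ne hab)
  · calc f (2 ^ (K + 1))
        ≤ f (2 ^ (mins (a + b) + 1)) :=
          hf (Nat.pow_le_pow_right two_pos (Nat.succ_le_succ (le_mins_add hab hagree)))
      _ < maxs (a + b) := h
      _ ≤ max (maxs a) (maxs b) := maxs_add_le a b

theorem stmt1_general [TopologicalSpace (ℕ →₀ ZMod 2)]
    (f : ℕ → ℕ) (hf : Monotone f)
    (V : Set (ℕ →₀ ZMod 2)) (hV : V ∈ nhds 0)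
    (hVV : ∀ x ∈ V, ∀ y ∈ V, x + y ∈ Uf (fun n => f (2 ^ (n + 1))))
    (e : ℕ → ℕ) (he : StrictMono e) (hrange : Set.range e = maxs '' (V \ {0})) :
    ∀ i, f i < e i := by
  intro i
  have hx : ∀ j, ∃ x ∈ V \ {0}, maxs x = e j := fun j =>
    show e j ∈ maxs '' (V \ {0}) from hrange ▸ Set.mem_range_self j
  choose x hxV hxe using hx
  classical
  set s := insert 0 ((Finset.range (i + 1)).image x)
  have hsV : ∀ a ∈ s, a ∈ V ∧ maxs a ≤ e i := by
    simp only [s, Finset.mem_insert, Finset.mem_image, Finset.mem_range]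
    rintro a (rfl | ⟨j, hj, rfl⟩)
    · -- `maxs 0 = sSup ∅ = 0`
      exact ⟨mem_of_mem_nhds hV, by simp [maxs]⟩
    · exact ⟨(hxV j).1, hxe j ▸ he.monotone (Nat.lt_succ_iff.1 hj)⟩
  have hcard : s.card = i + 2 := by
    have hinj : Function.Injective x := fun j k hjk => he.injective (by rw [← hxe, ← hxe, hjk])
    rw [Finset.card_insert_of_notMem, Finset.card_image_of_injective _ hinj, Finset.card_range]
    simpa using fun j _ => (hxV j).2
  set K := Nat.log 2 (i + 1)
  obtain ⟨a, ha, b, hb, hab, hagree⟩ := exists_ne_forall_lt_eq_of_pow_lt_card (s := s) (K := K)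
    DFunLike.coe (by
      rw [hcard, ZMod.card]
      exact (Nat.pow_log_le_self 2 i.succ_ne_zero).trans_lt (i + 1).lt_succ_self)
  calc f i ≤ f (2 ^ (K + 1)) :=
        hf ((Nat.lt_pow_succ_log_self one_lt_two (i + 1)).le.trans' i.le_succ)
    _ < max (maxs a) (maxs b) := lt_max_maxs_of_add_mem_Uf hf hab hagree
        (hVV a (hsV a ha).1 b (hsV b hb).1)
    _ ≤ e i := max_le (hsV a ha).2 (hsV b hb).2

/-- Lemma 1. -/
theorem stmt1 [TopologicalSpace (ℕ →₀ ZMod 2)] [IsTopologicalAddGroup (ℕ →₀ ZMod 2)]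
    (hU : ∀ f : ℕ → ℕ, ∃ W : Set (ℕ →₀ ZMod 2), IsOpen W ∧ 0 ∈ W ∧ W ⊆ Uf f)
    (f : ℕ → ℕ) (hf : Monotone f)
    (V : Set (ℕ →₀ ZMod 2)) (hV : V ∈ nhds 0)
    (hVV : ∀ x ∈ V, ∀ y ∈ V, x + y ∈ Uf (fun n => f (2 ^ (n + 1))))
    (e : ℕ → ℕ) (he : StrictMono e) (hrange : Set.range e = maxs '' (V \ {0})) :
    ∀ i, f i < e i :=
  stmt1_general f hf V hV hVV e he hrange
end

section
/- Let G be a countable vector space over the field Z/2Z, and let G = G_0 ⊇ G_1 ⊇ G_2 ⊇ … be a decreasing chain of subspaces with ⋂_{i∈ω} G_i = {0}. Then there exists a basis E = {e_n : n ∈ ω} of G such that for every i ∈ ω there is a subset J_i ⊆ ω with G_i = span{e_n : n ∈ J_i}. -/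
/-!
Build the basis greedily along an enumeration of `G`, keeping a finite independent set `B` that is
adapted to the chain: `span B ⊓ G i = span (B ∩ G i)` for every `i`. To absorb a vector
`g ∉ span B`, insert instead an element `g'` of the coset `g + span B` lying as deep in the chain as
any element of the coset. It exists because the coset lies in a finite-dimensional space on which
the chain eventually vanishes, and `insert g' B` stays adapted: if `a • g' + z ∈ G i` with `a ≠ 0`
and `z ∈ span B`, then `g' + a⁻¹ • z ∈ G i`, hence `g' ∈ G i`. Independence and adaptedness pass to
the increasing union of these finite sets.
-/

open Submodule

theorem Set.exists_mem_forall_mem_of_antitone {α : Type*} {s : ℕ → Set α} (hs : Antitone s)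
    {C : Set α} (hC : C.Nonempty) {n : ℕ} (hn : Disjoint C (s n)) :
    ∃ x ∈ C, ∀ i, (C ∩ s i).Nonempty → x ∈ s i := by
  classical
  by_cases h : ∃ i, (C ∩ s i).Nonempty
  · have hle_n : ∀ i, (C ∩ s i).Nonempty → i ≤ n := fun i hi ↦ by
      by_contra! hni
      obtain ⟨x, hxC, hxi⟩ := hi
      exact hn.notMem_of_mem_left hxC (hs hni.le hxi)
    obtain ⟨i, hi⟩ := h
    obtain ⟨x, hxC, hxm⟩ :=
      Nat.findGreatest_spec (P := fun i ↦ (C ∩ s i).Nonempty) (hle_n i hi) hi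
    exact ⟨x, hxC, fun j hj ↦ hs (Nat.le_findGreatest (hle_n j hj) hj) hxm⟩
  · obtain ⟨x, hx⟩ := hC
    exact ⟨x, hx, fun i hi ↦ absurd ⟨i, hi⟩ h⟩

variable {K V : Type*} [DivisionRing K] [AddCommGroup V] [Module K V]

theorem Submodule.exists_inf_eq_bot_of_iInf_eq_bot {ι : Type*} [Nonempty ι]
    {Gs : ι → Submodule K V} (hdir : Directed (· ≥ ·) Gs) (hint : ⨅ i, Gs i = ⊥)
    (W : Submodule K V) [IsArtinian K W] : ∃ n, W ⊓ Gs n = ⊥ := by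
  obtain ⟨_, ⟨n, rfl⟩, hmin⟩ := (wellFounded_lt (α := Submodule K W)).has_min
    (Set.range fun i ↦ (Gs i).comap W.subtype) (Set.range_nonempty _)
  refine ⟨n, eq_bot_iff.2 fun x ⟨hxW, hxn⟩ ↦ ?_⟩
  rw [← hint, mem_iInf]
  intro i
  obtain ⟨j, hjn, hji⟩ := hdir n i
  have : (Gs j).comap W.subtype = (Gs n).comap W.subtype :=
    (comap_mono hjn).eq_of_not_lt (hmin _ ⟨j, rfl⟩)
  have hx : (⟨x, hxW⟩ : W) ∈ (Gs j).comap W.subtype := this ▸ hxn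
  exact hji hx

def IsAdapted {ι : Type*} (Gs : ι → Submodule K V) (B : Set V) : Prop :=
  ∀ i, span K B ⊓ Gs i ≤ span K (B ∩ Gs i)

variable {ι : Type*} {Gs : ι → Submodule K V}

theorem isAdapted_empty : IsAdapted Gs (∅ : Set V) := fun i ↦ by simp

protected theorem IsAdapted.insert {B : Set V} (hB : IsAdapted Gs B) {g : V}
    (hg : ∀ i, ∀ c ∈ span K B, g + c ∈ Gs i → g ∈ Gs i) : IsAdapted Gs (insert g B) := by
  rintro i x ⟨hx, hxi⟩
  obtain ⟨a, z, hz, rfl⟩ := mem_span_insert.1 hx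
  have hBi : span K (B ∩ Gs i) ≤ span K (insert g B ∩ Gs i) :=
    span_mono (Set.inter_subset_inter_left _ (Set.subset_insert _ _))
  by_cases hgi : g ∈ Gs i
  · have hzi : z ∈ Gs i := by simpa using sub_mem hxi (smul_mem _ a hgi)
    exact add_mem (smul_mem _ a (subset_span ⟨Set.mem_insert _ _, hgi⟩)) (hBi (hB i ⟨hz, hzi⟩))
  · obtain rfl : a = 0 := by
      by_contra ha
      refine hgi (hg i _ (smul_mem _ a⁻¹ hz) ?_)
      simpa [smul_add, smul_smul, ha] using smul_mem _ a⁻¹ hxi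
    rw [zero_smul, zero_add] at hxi ⊢
    exact hBi (hB i ⟨hz, hxi⟩)

theorem IsAdapted.iUnion {η : Type*} [Nonempty η] {F : η → Set V} (hF : Directed (· ⊆ ·) F)
    (h : ∀ n, IsAdapted Gs (F n)) : IsAdapted Gs (⋃ n, F n) := by
  intro i x hx
  obtain ⟨hx, hxi⟩ := mem_inf.1 hx
  rw [span_iUnion] at hx
  have hdir : Directed (· ≤ ·) fun n ↦ span K (F n) :=
    hF.mono_comp (g := span K) _ fun _ _ ↦ span_mono
  obtain ⟨n, hxn⟩ := (mem_iSup_of_directed _ hdir).1 hx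
  exact span_mono (Set.inter_subset_inter_left _ (Set.subset_iUnion F n)) (h n i ⟨hxn, hxi⟩)

theorem IsAdapted.span_inter_eq {E : Set V} (hE : IsAdapted Gs E) (hspan : span K E = ⊤) (i : ι) :
    span K (E ∩ Gs i) = Gs i :=
  le_antisymm (span_le.2 Set.inter_subset_right) (by simpa [hspan] using hE i)

section Chain

variable {Gs : ℕ → Submodule K V}

theorem IsAdapted.exists_insert (hdec : Antitone Gs) (hint : ⨅ i, Gs i = ⊥) {B : Set V}
    (hB : B.Finite) (hBad : IsAdapted Gs B) {g : V} (hg : g ∉ span K B) :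
    ∃ g', g' - g ∈ span K B ∧ IsAdapted Gs (insert g' B) := by
  set C := {x | x - g ∈ span K B}
  have : IsArtinian K (span K (insert g B)) := isArtinian_span_of_finite K (hB.insert g)
  obtain ⟨n, hn⟩ := exists_inf_eq_bot_of_iInf_eq_bot hdec.directed_ge hint (span K (insert g B))
  have hCn : Disjoint C (Gs n) := Set.disjoint_left.2 fun x hxC hxn ↦ by
    have hxW : x ∈ span K (insert g B) :=
      mem_span_insert.2 ⟨1, x - g, hxC, by rw [one_smul, add_sub_cancel]⟩
    have hx0 : x = 0 := (mem_bot K).1 (hn ▸ mem_inf.2 ⟨hxW, hxn⟩)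
    exact hg (by simpa [hx0] using neg_mem (show x - g ∈ span K B from hxC))
  obtain ⟨g', hg'C, hdeep⟩ :=
    Set.exists_mem_forall_mem_of_antitone (fun _ _ h ↦ hdec h) ⟨g, by simp [C]⟩ hCn
  refine ⟨g', hg'C, hBad.insert fun i c hc hgc ↦ hdeep i ⟨g' + c, ?_, hgc⟩⟩
  simpa [C, add_sub_right_comm] using add_mem hg'C hc

theorem exists_isAdapted_superset_mem_span (hdec : Antitone Gs) (hint : ⨅ i, Gs i = ⊥)
    {B : Set V} (hB : B.Finite) (hli : LinearIndepOn K id B) (hBad : IsAdapted Gs B) (g : V) :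
    ∃ B', B ⊆ B' ∧ B'.Finite ∧ LinearIndepOn K id B' ∧ IsAdapted Gs B' ∧ g ∈ span K B' := by
  by_cases hg : g ∈ span K B
  · exact ⟨B, subset_rfl, hB, hli, hBad, hg⟩
  obtain ⟨g', hg'g, hg'ad⟩ := hBad.exists_insert hdec hint hB hg
  have hg' : g' ∉ span K B := fun h ↦ hg (by simpa using sub_mem h hg'g)
  refine ⟨insert g' B, Set.subset_insert _ _, hB.insert g', hli.id_insert hg', hg'ad, ?_⟩
  simpa using sub_mem (subset_span (Set.mem_insert g' B)) (span_mono (Set.subset_insert g' B) hg'g)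

theorem exists_linearIndepOn_isAdapted_span_eq_top [Countable V] (hdec : Antitone Gs)
    (hint : ⨅ i, Gs i = ⊥) :
    ∃ E : Set V, LinearIndepOn K id E ∧ span K E = ⊤ ∧ IsAdapted Gs E := by
  obtain ⟨f, hf⟩ := exists_surjective_nat V
  let Good := {B : Set V // B.Finite ∧ LinearIndepOn K id B ∧ IsAdapted Gs B}
  choose grow hsub hfin hli had hmem using
    fun B : Good ↦ exists_isAdapted_superset_mem_span hdec hint B.2.1 B.2.2.1 B.2.2.2
  let F : ℕ → Good := fun n ↦
    Nat.rec ⟨∅, Set.finite_empty, linearIndepOn_empty K id, isAdapted_empty⟩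
      (fun n B ↦ ⟨grow B (f n), hfin B (f n), hli B (f n), had B (f n)⟩) n
  have hmono : Monotone fun n ↦ (F n).1 := monotone_nat_of_le_succ fun n ↦ hsub _ _
  refine ⟨⋃ n, (F n).1, linearIndepOn_iUnion_of_directed hmono.directed_le fun n ↦ (F n).2.2.1,
    eq_top_iff.2 fun x _ ↦ ?_, IsAdapted.iUnion hmono.directed_le fun n ↦ (F n).2.2.2⟩
  obtain ⟨n, rfl⟩ := hf x
  exact span_mono (Set.subset_iUnion _ (n + 1)) (hmem (F n) (f n))

end Chain

theorem stmt2_general (G : Type) [AddCommGroup G] [Module (ZMod 2) G] [Countable G]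
    (Gs : ℕ → Submodule (ZMod 2) G) (hdec : Antitone Gs)
    (hint : ⨅ i, Gs i = ⊥) :
    ∃ (ι : Type) (_ : Countable ι) (b : Module.Basis ι (ZMod 2) G),
      ∀ i, ∃ J : Set ι, Gs i = Submodule.span (ZMod 2) (⇑b '' J) := by
  obtain ⟨E, hli, hspan, had⟩ := exists_linearIndepOn_isAdapted_span_eq_top hdec hint
  let b := Module.Basis.mk hli.linearIndependent (by simp [hspan])
  refine ⟨E, inferInstance, b, fun i ↦ ⟨{x | (x : G) ∈ Gs i}, ?_⟩⟩
  have himage : ⇑b '' {x | (x : G) ∈ Gs i} = E ∩ Gs i := by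
    ext; simp [b, and_comm]
  rw [himage, had.span_inter_eq hspan]

/-- a countable ℤ/2ℤ-vector space with a decreasing chain of subspaces
with trivial intersection has a basis adapted to the chain. -/
theorem stmt2 (G : Type) [AddCommGroup G] [Module (ZMod 2) G] [Countable G]
    (Gs : ℕ → Submodule (ZMod 2) G) (h0 : Gs 0 = ⊤) (hdec : Antitone Gs)
    (hint : ⨅ i, Gs i = ⊥) :
    ∃ (ι : Type) (_ : Countable ι) (b : Module.Basis ι (ZMod 2) G),
      ∀ i, ∃ J : Set ι, Gs i = Submodule.span (ZMod 2) (⇑b '' J) :=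
  stmt2_general G Gs hdec hint
end

section
/- Let G = ⊕_ω Z/2Z with the topology inherited from the product topology, and let f : ω → ω. Then the set C_f = {x ∈ G \ {0} : max supp(x) ≤ f(min supp(x))} is discrete in the subspace topology, and C_f ∪ {0} is closed in G. -/
def prodTop : TopologicalSpace (ℕ →₀ ZMod 2) :=
  TopologicalSpace.induced (fun x => (x : ℕ → ZMod 2))
    (@Pi.topologicalSpace ℕ (fun _ => ZMod 2) (fun _ => ⊥))

def Cf (f : ℕ → ℕ) : Set (ℕ →₀ ZMod 2) := {x | x ≠ 0 ∧ maxs x ≤ f (mins x)}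

attribute [local instance] prodTop

variable {x y : ℕ →₀ ZMod 2} {n N : ℕ}

lemma bddAbove_setOf_apply_ne_zero (x : ℕ →₀ ZMod 2) : BddAbove {n | x n ≠ 0} :=
  x.support.finite_toSet.bddAbove.mono fun _ => Finsupp.mem_support_iff.mpr

lemma nonempty_setOf_apply_ne_zero (hx : x ≠ 0) : {n | x n ≠ 0}.Nonempty := by
  obtain ⟨n, hn⟩ := Finsupp.support_nonempty_iff.mpr hx
  exact ⟨n, Finsupp.mem_support_iff.mp hn⟩

lemma mins_le_of_apply_ne_zero (h : x n ≠ 0) : mins x ≤ n := Nat.sInf_le h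

lemma le_maxs_of_apply_ne_zero (h : x n ≠ 0) : n ≤ maxs x :=
  le_csSup (bddAbove_setOf_apply_ne_zero x) h

lemma apply_eq_zero_of_lt_mins (h : n < mins x) : x n = 0 :=
  not_not.mp fun hn => (mins_le_of_apply_ne_zero hn).not_gt h

lemma apply_eq_zero_of_maxs_lt (h : maxs x < n) : x n = 0 :=
  not_not.mp fun hn => (le_maxs_of_apply_ne_zero hn).not_gt h

lemma apply_mins_ne_zero (hx : x ≠ 0) : x (mins x) ≠ 0 :=
  Nat.sInf_mem (nonempty_setOf_apply_ne_zero hx)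

lemma apply_maxs_ne_zero (hx : x ≠ 0) : x (maxs x) ≠ 0 :=
  Nat.sSup_mem (nonempty_setOf_apply_ne_zero hx) (bddAbove_setOf_apply_ne_zero x)

lemma mins_le_maxs (hx : x ≠ 0) : mins x ≤ maxs x :=
  le_maxs_of_apply_ne_zero (apply_mins_ne_zero hx)

def agreeSet (N : ℕ) (x : ℕ →₀ ZMod 2) : Set (ℕ →₀ ZMod 2) :=
  {y | ∀ i ≤ N, y i = x i}

lemma mem_agreeSet_self (N : ℕ) (x : ℕ →₀ ZMod 2) : x ∈ agreeSet N x := fun _ _ => rfl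

lemma isOpen_agreeSet (N : ℕ) (x : ℕ →₀ ZMod 2) : IsOpen (agreeSet N x) := by
  have : agreeSet N x = (⇑) ⁻¹' (Set.Iic N).pi fun i => {x i} := by
    ext y
    simp [agreeSet]
  rw [this]
  -- `ZMod 2` carries `⊥` as its instance, so `prodTop` is induced from the product instance
  exact isOpen_induced (isOpen_set_pi (Set.finite_Iic N) fun _ _ => isOpen_discrete _)

lemma ne_zero_of_mem_agreeSet (hy : y ∈ agreeSet N x) (hx : x ≠ 0) (hN : mins x ≤ N) :
    y ≠ 0 := by
  rintro rfl
  exact apply_mins_ne_zero hx (hy _ hN).symm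

lemma mins_eq_of_mem_agreeSet (hy : y ∈ agreeSet N x) (hx : x ≠ 0) (hN : mins x ≤ N) :
    mins y = mins x := by
  have hyx : y (mins x) ≠ 0 := hy _ hN ▸ apply_mins_ne_zero hx
  refine le_antisymm (mins_le_of_apply_ne_zero hyx) (not_lt.mp fun hlt => ?_)
  have hy_mins : y (mins y) = x (mins y) := hy _ (hlt.le.trans hN)
  exact apply_mins_ne_zero (ne_zero_of_mem_agreeSet hy hx hN)
    (hy_mins.trans (apply_eq_zero_of_lt_mins hlt))

lemma maxs_le_of_mem_agreeSet (hy : y ∈ agreeSet N x) (hx : x ≠ 0) (hN : maxs x ≤ N) :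
    maxs x ≤ maxs y :=
  le_maxs_of_apply_ne_zero (hy _ hN ▸ apply_maxs_ne_zero hx)

lemma eq_of_mem_agreeSet (hy : y ∈ agreeSet N x) (hxN : maxs x ≤ N) (hyN : maxs y ≤ N) :
    y = x := by
  ext i
  rcases le_or_gt i N with hi | hi
  · exact hy i hi
  · rw [apply_eq_zero_of_maxs_lt (hyN.trans_lt hi), apply_eq_zero_of_maxs_lt (hxN.trans_lt hi)]

lemma Cf_inter_agreeSet {f : ℕ → ℕ} (hx : x ∈ Cf f) :
    Cf f ∩ agreeSet (f (mins x)) x = {x} := by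
  obtain ⟨hx0, hxf⟩ := hx
  ext y
  refine ⟨fun ⟨⟨_, hyf⟩, hy⟩ => ?_, fun hy => ?_⟩
  · have hN : mins x ≤ f (mins x) := (mins_le_maxs hx0).trans hxf
    rw [mins_eq_of_mem_agreeSet hy hx0 hN] at hyf
    exact eq_of_mem_agreeSet hy hxf hyf
  · rw [hy]
    exact ⟨⟨hx0, hxf⟩, mem_agreeSet_self _ _⟩

lemma agreeSet_maxs_subset_compl {f : ℕ → ℕ} (hx : x ∉ Cf f ∪ {0}) :
    agreeSet (maxs x) x ⊆ (Cf f ∪ {0})ᶜ := by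
  simp only [Cf, Set.mem_union, Set.mem_ofPred_eq, Set.mem_singleton_iff, not_or, not_and,
    not_le] at hx
  obtain ⟨hxf, hx0⟩ := hx
  intro y hy
  have hN : mins x ≤ maxs x := mins_le_maxs hx0
  have hy0 := ne_zero_of_mem_agreeSet hy hx0 hN
  have hyf : f (mins y) < maxs y := by
    rw [mins_eq_of_mem_agreeSet hy hx0 hN]
    exact (hxf hx0).trans_le (maxs_le_of_mem_agreeSet hy hx0 le_rfl)
  simp only [Cf, Set.mem_compl_iff, Set.mem_union, Set.mem_ofPred_eq, Set.mem_singleton_iff,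
    not_or, not_and, not_le]
  exact ⟨fun _ => hyf, hy0⟩

/-- C_f is discrete in the product topology and C_f ∪ {0} is closed. -/
theorem stmt4 (f : ℕ → ℕ) :
    letI : TopologicalSpace (ℕ →₀ ZMod 2) := prodTop
    DiscreteTopology ↥(Cf f) ∧ IsClosed (Cf f ∪ {0}) := by
  refine ⟨discreteTopology_iff_isOpen_singleton.mpr fun ⟨x, hx⟩ => ?_, ?_⟩
  · refine isOpen_induced_iff.mpr ⟨_, isOpen_agreeSet (f (mins x)) x, ?_⟩
    ext ⟨y, hy⟩
    simpa [hy, Subtype.ext_iff] using Set.ext_iff.mp (Cf_inter_agreeSet hx) y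
  · refine isOpen_compl_iff.mp (isOpen_iff_forall_mem_open.mpr fun x hx => ?_)
    exact ⟨_, agreeSet_maxs_subset_compl hx, isOpen_agreeSet _ x, mem_agreeSet_self _ x⟩
end

section
/- Let U be an ultrafilter on ω and m : ω → ω strictly increasing such that for every partition ω = ⊔_i A_i with A_i ∉ U there exists A ∈ U with: for all i, n ∈ A ∩ A_i implies A ∩ A_i ∩ {j : j ≥ m(n)} = ∅. Define M_0 = m(0), M_{k+1} = m(M_k), and Φ : ω → ω by Φ(j) = n iff M_n ≤ j < M_{n+1} (and Φ(j) = 0 for j < M_0). Then the pushforward ultrafilter Φ(U) is a Ramsey ultrafilter on ω. -/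
/-!
Apply partial selectivity to the partition `Φ⁻¹(B i)`: it yields `S ∈ U` such that whenever
`n, n' ∈ S` lie in the same piece, `n' < m n`. As `n < M (Φ n + 1)`, this gives
`n' < m (M (Φ n + 1)) = M (Φ n + 2)`, so on each piece the `Φ`-values of points of `S` differ
by at most one. Intersecting `Φ(S)` with whichever parity class lies in `Φ(U)` then leaves at
most one point in each `B i`.
-/

/-- M_0 = m 0, M_{k+1} = m (M_k). -/
def Mseq (m : ℕ → ℕ) : ℕ → ℕ
  | 0 => m 0
  | k + 1 => m (Mseq m k)

/-- Φ(j) = n iff M_n ≤ j < M_{n+1}, and Φ(j) = 0 for j < M_0. -/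
noncomputable def Phi (m : ℕ → ℕ) (j : ℕ) : ℕ := sSup {n | Mseq m n ≤ j}

namespace Nat

variable {f : ℕ → ℕ} {j k : ℕ}

theorem sSup_setOf_apply_le_le (hf : Monotone f) (h : j < f (k + 1)) :
    sSup {n | f n ≤ j} ≤ k := by
  by_contra! hk
  have hne : {n | f n ≤ j}.Nonempty :=
    Set.nonempty_iff_ne_empty.2 fun hempty => by simp [hempty] at hk
  obtain ⟨n, hn, hkn⟩ := exists_lt_of_lt_csSup hne hk
  exact ((hf hkn).trans hn).not_gt h

theorem lt_apply_sSup_setOf_apply_le_add_one (hf : StrictMono f) (j : ℕ) :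
    j < f (sSup {n | f n ≤ j} + 1) := by
  by_contra! h
  have := le_csSup (s := {n | f n ≤ j}) ⟨j, fun n hn => hf.le_apply.trans hn⟩ h
  omega

end Nat

theorem Ultrafilter.exists_mem_forall_add_one_notMem (V : Ultrafilter ℕ) :
    ∃ T ∈ V, ∀ a ∈ T, a + 1 ∉ T := by
  rcases V.mem_or_compl_mem {a | Even a} with h | h
  · exact ⟨_, h, fun a ha ha' => Nat.even_add_one.1 ha' ha⟩
  · exact ⟨_, h, fun a ha ha' => ha' (Nat.even_add_one.2 ha)⟩

theorem Ultrafilter.exists_mem_forall_subsingleton_inter {ι : Type*} {V : Ultrafilter ℕ}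
    {R : Set ℕ} (hR : R ∈ V) {B : ι → Set ℕ}
    (hB : ∀ i, ∀ a ∈ R ∩ B i, ∀ b ∈ R ∩ B i, b ≤ a + 1) :
    ∃ S ∈ V, ∀ i, (S ∩ B i).Subsingleton := by
  obtain ⟨T, hT, hTsucc⟩ := V.exists_mem_forall_add_one_notMem
  refine ⟨R ∩ T, Filter.inter_mem hR hT, ?_⟩
  rintro i a ⟨⟨haR, haT⟩, haB⟩ b ⟨⟨hbR, hbT⟩, hbB⟩
  have hba := hB i a ⟨haR, haB⟩ b ⟨hbR, hbB⟩
  have hab := hB i b ⟨hbR, hbB⟩ a ⟨haR, haB⟩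
  have hba' : b ≠ a + 1 := fun h => hTsucc a haT (h ▸ hbT)
  have hab' : a ≠ b + 1 := fun h => hTsucc b hbT (h ▸ haT)
  omega

section Mseq

variable {m : ℕ → ℕ}

theorem Mseq_monotone (hm : StrictMono m) : Monotone (Mseq m) :=
  monotone_nat_of_le_succ fun _ => hm.le_apply

theorem Mseq_strictMono (hm : StrictMono m) (h0 : 0 < m 0) : StrictMono (Mseq m) :=
  strictMono_nat_of_lt_succ fun k => by
    exact (Nat.lt_add_of_pos_right h0).trans_le (hm.add_le_nat (Mseq m k) 0)

theorem Mseq_eq_zero (h0 : m 0 = 0) (k : ℕ) : Mseq m k = 0 := by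
  induction k with
  | zero => exact h0
  | succ k ih => simp only [Mseq, ih, h0]

-- Every `n` satisfies `Mseq m n ≤ j`, and `sSup` of the unbounded set `ℕ` is `0`.
theorem Phi_eq_zero (h0 : m 0 = 0) (j : ℕ) : Phi m j = 0 := by
  simp [Phi, Mseq_eq_zero h0]

theorem Phi_le_Phi_add_one (hm : StrictMono m) {n n' : ℕ} (h : n' < m n) :
    Phi m n' ≤ Phi m n + 1 := by
  rcases Nat.eq_zero_or_pos (m 0) with h0 | h0
  · simp [Phi_eq_zero h0]
  · refine Nat.sSup_setOf_apply_le_le (Mseq_monotone hm) ?_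
    calc n' < m n := h
      _ < m (Mseq m (Phi m n + 1)) :=
        hm (Nat.lt_apply_sSup_setOf_apply_le_add_one (Mseq_strictMono hm h0) n)

end Mseq

/-- the pushforward Φ(U) of a partially selective ultrafilter is Ramsey. -/
theorem stmt9 (U : Ultrafilter ℕ) (m : ℕ → ℕ) (hm : StrictMono m)
    (hps : ∀ A : ℕ → Set ℕ, Pairwise (Function.onFun Disjoint A) →
      (⋃ i, A i) = Set.univ → (∀ i, A i ∉ U) →
      ∃ S ∈ U, ∀ i, ∀ n ∈ S ∩ A i, S ∩ A i ∩ {j | m n ≤ j} = ∅) :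
    ∀ B : ℕ → Set ℕ, Pairwise (Function.onFun Disjoint B) →
      (⋃ i, B i) = Set.univ → (∀ i, B i ∉ U.map (Phi m)) →
      ∃ S ∈ U.map (Phi m), ∀ i, (S ∩ B i).Subsingleton := by
  intro B hBdisj hBcover hBnot
  obtain ⟨S, hSU, hS⟩ := hps (fun i => Phi m ⁻¹' B i) (fun i j hij => (hBdisj hij).preimage _)
    (by rw [← Set.preimage_iUnion, hBcover, Set.preimage_univ]) hBnot
  refine Ultrafilter.exists_mem_forall_subsingleton_inter (V := U.map (Phi m))
    (Filter.image_mem_map hSU) ?_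
  rintro i _ ⟨⟨n, hn, rfl⟩, hnB⟩ _ ⟨⟨n', hn', rfl⟩, hn'B⟩
  refine Phi_le_Phi_add_one hm (not_le.1 fun h => ?_)
  exact (hS i n ⟨hn, hnB⟩).subset ⟨⟨hn', hn'B⟩, h⟩
end
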